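/- Let V be a finite-dimensional real inner product space, and let A, B : V → V be symmetric linear operators. Suppose A is positive semidefinite and the restriction of the quadratic form of B to ker A is positive definite (i.e., ⟨Bx, x⟩ > 0 for all nonzero x ∈ ker A). Then there exists ε₀ > 0 such that for all ε with 0 < ε ≤ ε₀, the operator A + εB is positive definite. -/
import Mathlib

open RealInnerProductSpace

private lemma aux_mono (a b e e' : ℝ) (ha : 0 ≤ a) (h : 0 < a + e * b)
    (he' : 0 < e') (hle : e' ≤ e) : 0 < a + e' * b := by
  nlinarith [mul_pos he' h, mul_nonneg ha (sub_nonneg.2 hle)]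

theorem perturbation_lemma {V : Type*} [NormedAddCommGroup V] [InnerProductSpace ℝ V]
    [FiniteDimensional ℝ V] (A B : V →ₗ[ℝ] V)
    (hAsym : LinearMap.IsSymmetric A) (hBsym : LinearMap.IsSymmetric B)
    (hApsd : ∀ x : V, 0 ≤ ⟪A x, x⟫)
    (hBker : ∀ x ∈ LinearMap.ker A, x ≠ 0 → 0 < ⟪B x, x⟫) :
    ∃ ε₀ : ℝ, 0 < ε₀ ∧ ∀ ε : ℝ, 0 < ε → ε ≤ ε₀ →
      ∀ x : V, x ≠ 0 → 0 < ⟪(A + ε • B) x, x⟫ := by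
  classical
  -- Step 1: kernel characterization: ⟪A x, x⟫ = 0 → A x = 0
  have hker : ∀ x : V, ⟪A x, x⟫ = 0 → A x = 0 := by
    intro x hx
    set c : ℝ := ⟪A x, A x⟫ with hc
    set d : ℝ := ⟪A (A x), A x⟫ with hd
    have hd0 : 0 ≤ d := hApsd (A x)
    have hc0 : 0 ≤ c := real_inner_self_nonneg
    set t : ℝ := -c / (d + 1) with ht
    have h := hApsd (x + t • A x)
    have expand : ⟪A (x + t • A x), x + t • A x⟫ = 2 * t * c + t ^ 2 * d := by
      have hsymm : ⟪A (A x), x⟫ = ⟪A x, A x⟫ := hAsym (A x) x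
      simp only [map_add, map_smul, inner_add_left, inner_add_right,
        real_inner_smul_left, real_inner_smul_right, hsymm, hx]
      ring
    rw [expand, ht] at h
    have hd1 : (0:ℝ) < d + 1 := by linarith
    have h3 : 0 ≤ (2 * (-c / (d + 1)) * c + (-c / (d + 1)) ^ 2 * d) * (d + 1) ^ 2 :=
      mul_nonneg h (by positivity)
    have h4 : (2 * (-c / (d + 1)) * c + (-c / (d + 1)) ^ 2 * d) * (d + 1) ^ 2
        = -2 * c ^ 2 * (d + 1) + c ^ 2 * d := by
      field_simp
    rw [h4] at h3
    have hcle : c ≤ 0 := by nlinarith [mul_nonneg (mul_nonneg hc0 hc0) hd0]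
    have hcz : (⟪A x, A x⟫ : ℝ) = 0 := le_antisymm hcle hc0
    exact inner_self_eq_zero.mp hcz
  -- Step 2: the open sets
  set U : ℕ → Set V := fun n => {x | 0 < ⟪A x, x⟫ + (1 / ((n : ℝ) + 1)) * ⟪B x, x⟫} with hU
  have hUopen : ∀ n, IsOpen (U n) := by
    intro n
    have hA : Continuous fun x : V => ⟪A x, x⟫ :=
      (A.continuous_of_finiteDimensional).inner continuous_id
    have hB : Continuous fun x : V => ⟪B x, x⟫ :=
      (B.continuous_of_finiteDimensional).inner continuous_id
    exact isOpen_lt continuous_const (hA.add (continuous_const.mul hB))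
  have hcov : Metric.sphere (0 : V) 1 ⊆ ⋃ n, U n := by
    intro x hx
    have hx1 : ‖x‖ = 1 := by simpa using hx
    have hxne : x ≠ 0 := by
      intro h; rw [h] at hx1; simp at hx1
    rcases (hApsd x).lt_or_eq with hA | hA
    · -- qA x > 0
      set a : ℝ := ⟪A x, x⟫ with hadef
      set b : ℝ := ⟪B x, x⟫ with hbdef
      obtain ⟨n, hn⟩ := exists_nat_gt (|b| / a)
      rw [div_lt_iff₀ hA] at hn
      have h1 : |b| < a * ((n : ℝ) + 1) := by nlinarith [hn, hA]
      have key : 0 < a * ((n : ℝ) + 1) + b := by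
        nlinarith [neg_abs_le b]
      have hn1 : (0:ℝ) < (n : ℝ) + 1 := by positivity
      have heq : a + (1 / ((n : ℝ) + 1)) * b = (a * ((n : ℝ) + 1) + b) / ((n : ℝ) + 1) := by
        field_simp
      refine Set.mem_iUnion.mpr ⟨n, ?_⟩
      show 0 < a + (1 / ((n : ℝ) + 1)) * b
      rw [heq]
      exact div_pos key hn1
    · -- qA x = 0, so x ∈ ker A
      have hxker : x ∈ LinearMap.ker A := LinearMap.mem_ker.mpr (hker x hA.symm)
      have hB := hBker x hxker hxne
      refine Set.mem_iUnion.mpr ⟨0, ?_⟩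
      show 0 < ⟪A x, x⟫ + (1 / ((0 : ℕ) + 1 : ℝ)) * ⟪B x, x⟫
      rw [← hA]
      simpa using hB
  obtain ⟨s, hs⟩ := (isCompact_sphere (0 : V) 1).elim_finite_subcover U hUopen hcov
  set N : ℕ := s.sup id with hN
  have hsphere : ∀ x ∈ Metric.sphere (0 : V) 1,
      0 < ⟪A x, x⟫ + (1 / ((N : ℝ) + 1)) * ⟪B x, x⟫ := by
    intro x hx
    obtain ⟨n, hn, hxn⟩ := Set.mem_iUnion₂.mp (hs hx)
    have hnN : n ≤ N := Finset.le_sup (f := id) hn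
    have h1 : (0:ℝ) < 1 / ((N : ℝ) + 1) := by positivity
    have h2 : 1 / ((N : ℝ) + 1) ≤ 1 / ((n : ℝ) + 1) := by
      apply one_div_le_one_div_of_le (by positivity)
      exact_mod_cast by omega
    exact aux_mono _ _ _ _ (hApsd x) hxn h1 h2
  refine ⟨1 / ((N : ℝ) + 1), by positivity, ?_⟩
  intro ε hε hεle x hxne
  have hnx : (0:ℝ) < ‖x‖ := norm_pos_iff.mpr hxne
  set y : V := ‖x‖⁻¹ • x with hy
  have hys : y ∈ Metric.sphere (0 : V) 1 := by
    simp [hy, norm_smul, abs_of_pos (inv_pos.mpr hnx), inv_mul_cancel₀ hnx.ne']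
  have hky := hsphere y hys
  have hkey : 0 < ⟪A y, y⟫ + ε * ⟪B y, y⟫ :=
    aux_mono _ _ _ _ (hApsd y) hky hε hεle
  have hAy : ⟪A y, y⟫ = ‖x‖⁻¹ * (‖x‖⁻¹ * ⟪A x, x⟫) := by
    simp [hy, map_smul, real_inner_smul_left, real_inner_smul_right]
  have hBy : ⟪B y, y⟫ = ‖x‖⁻¹ * (‖x‖⁻¹ * ⟪B x, x⟫) := by
    simp [hy, map_smul, real_inner_smul_left, real_inner_smul_right]
  rw [hAy, hBy] at hkey
  have hinv : (0:ℝ) < ‖x‖⁻¹ := inv_pos.mpr hnx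
  have hfinal : 0 < ⟪A x, x⟫ + ε * ⟪B x, x⟫ := by
    nlinarith [hkey, mul_pos hinv hinv]
  simpa [LinearMap.add_apply, LinearMap.smul_apply, inner_add_left,
    real_inner_smul_left] using hfinal
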